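/- Every Artinian perfect skew left brace of finite weight has weight equal to one, i.e., it is generated as an ideal by a single element. -/
import Mathlib


/-- A skew left brace: `(A,+)` and `(A,∘)` (written `*`) are groups with
`a ∘ (b + c) = a ∘ b - a + a ∘ c`. -/
class SkewBrace (A : Type*) extends AddGroup A, Group A where
  compat : ∀ a b c : A, a * (b + c) = a * b + (-a + a * c)

namespace SkewBrace

variable {A : Type*}

/-- `λ_a (b) = -a + a ∘ b`. -/
def lam [SkewBrace A] (a b : A) : A := -a + a * b

/-- `a * b = λ_a(b) - b = -a + a∘b - b` (the brace star operation). -/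
def star [SkewBrace A] (a b : A) : A := -a + a * b - b

/-- An ideal of a skew left brace: a subgroup of `(A,+)`, normal in `(A,+)` and
`(A,∘)`, and invariant under all `λ_a`. -/
structure Ideal (A : Type*) [SkewBrace A] where
  carrier : Set A
  zero_mem : (0 : A) ∈ carrier
  add_mem : ∀ ⦃a b : A⦄, a ∈ carrier → b ∈ carrier → a + b ∈ carrier
  neg_mem : ∀ ⦃a : A⦄, a ∈ carrier → -a ∈ carrier
  add_conj_mem : ∀ (a : A) ⦃b : A⦄, b ∈ carrier → a + b + -a ∈ carrier
  mul_conj_mem : ∀ (a : A) ⦃b : A⦄, b ∈ carrier → a * b * a⁻¹ ∈ carrier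
  lam_mem : ∀ (a : A) ⦃b : A⦄, b ∈ carrier → lam a b ∈ carrier

/-- The ideal generated by a set, as a set. -/
def genIdeal [SkewBrace A] (S : Set A) : Set A :=
  {x | ∀ I : Ideal A, S ⊆ I.carrier → x ∈ I.carrier}

/-- A maximal ideal: a proper ideal such that the only ideals containing it are
itself and the whole brace. -/
def Ideal.IsMaximal [SkewBrace A] (M : Ideal A) : Prop :=
  M.carrier ≠ Set.univ ∧
    ∀ J : Ideal A, M.carrier ⊆ J.carrier → J.carrier = M.carrier ∨ J.carrier = Set.univ

/-- The radical: the intersection of all maximal ideals (the whole brace if there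
are none). -/
def radical (A : Type*) [SkewBrace A] : Set A :=
  {x | ∀ M : Ideal A, M.IsMaximal → x ∈ M.carrier}

/-- The set of all elements `a * b` (star). -/
def starSet (A : Type*) [SkewBrace A] : Set A := {x | ∃ a b : A, star a b = x}

/-- `A⁽²⁾` as the ideal generated by all `a * b`. -/
def sq (A : Type*) [SkewBrace A] : Set A := genIdeal (starSet A)

/-- `A⁽²⁾` as the additive subgroup generated by all `a * b`. -/
def sqAdd (A : Type*) [SkewBrace A] : Set A := (AddSubgroup.closure (starSet A) : Set A)

open scoped Classical in
/-- The weight of a skew left brace: the minimal number of elements generating it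
as an ideal (with `ω(0) = 1` by convention). -/
noncomputable def weight (A : Type*) [SkewBrace A] : ℕ∞ :=
  if Subsingleton A then 1
  else ⨅ (S : Finset A) (_ : genIdeal (S : Set A) = Set.univ), (S.card : ℕ∞)

/-- Artinian: every descending chain of ideals is eventually stationary. -/
def IsArtinian (A : Type*) [SkewBrace A] : Prop :=
  ∀ f : ℕ → Ideal A, (∀ n, (f (n + 1)).carrier ⊆ (f n).carrier) →
    ∃ N, ∀ n, N ≤ n → (f n).carrier = (f N).carrier

/-- A homomorphism of skew left braces. -/
structure BraceHom (A B : Type*) [SkewBrace A] [SkewBrace B] where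
  toFun : A → B
  map_add' : ∀ x y, toFun (x + y) = toFun x + toFun y
  map_mul' : ∀ x y, toFun (x * y) = toFun x * toFun y

/-- The kernel of a brace homomorphism. -/
def BraceHom.ker {A B : Type*} [SkewBrace A] [SkewBrace B] (f : BraceHom A B) : Set A :=
  {a | f.toFun a = 0}

/-- The socle `Soc(A) = Ker λ ∩ Z(A,+)`. -/
def Soc (A : Type*) [SkewBrace A] : Set A :=
  {a | (∀ b : A, lam a b = b) ∧ ∀ b : A, a + b = b + a}

/-- The annihilator `Ann(A) = Soc(A) ∩ Z(A,∘)`. -/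
def ann (A : Type*) [SkewBrace A] : Set A :=
  {a | (∀ b : A, lam a b = b) ∧ (∀ b : A, a + b = b + a) ∧ (∀ b : A, a * b = b * a)}

/-- A simple skew left brace: it has exactly two ideals, `0` and itself. -/
def IsSimple (A : Type*) [SkewBrace A] : Prop :=
  (∃ x y : A, x ≠ y) ∧ ∀ I : Ideal A, I.carrier = {(0 : A)} ∨ I.carrier = Set.univ

/-- A prime ideal `P`: the quotient `A/P` is a prime brace; internally, for all
ideals `I, J ⊇ P` with `I * J ⊆ P`, one of `I, J` equals `P`. -/
def Ideal.IsPrime [SkewBrace A] (P : Ideal A) : Prop :=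
  ∀ I J : Ideal A, P.carrier ⊆ I.carrier → P.carrier ⊆ J.carrier →
    (∀ i ∈ I.carrier, ∀ j ∈ J.carrier, star i j ∈ P.carrier) →
    I.carrier ⊆ P.carrier ∨ J.carrier ⊆ P.carrier


/-! ### Auxiliary lemmas for the proof -/

section Aux

variable {A : Type*} [SkewBrace A]

lemma mul_zero' (a : A) : a * 0 = a := by
  have h := compat a 0 0
  rw [add_zero] at h
  have h0 : (0 : A) = -a + a * 0 := by
    have := add_left_cancel ((add_zero (a * 0)).trans h)
    exact this
  have : a + 0 = a + (-a + a * 0) := by rw [← h0]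
  rwa [add_zero, add_neg_cancel_left, eq_comm] at this

lemma zero_eq_one' : (0 : A) = 1 := by
  have h1 := mul_zero' (1 : A)
  rwa [one_mul] at h1

lemma lam_zero (a : A) : lam a 0 = 0 := by
  rw [lam, mul_zero', neg_add_cancel]

lemma lam_add (a b c : A) : lam a (b + c) = lam a b + lam a c := by
  simp only [lam, compat a b c, add_assoc]

lemma lam_neg (a b : A) : lam a (-b) = -(lam a b) := by
  have h := lam_add a b (-b)
  rw [add_neg_cancel, lam_zero] at h
  exact (neg_eq_of_add_eq_zero_right h.symm).symm

lemma lam_sub (a b c : A) : lam a (b - c) = lam a b - lam a c := by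
  rw [sub_eq_add_neg, lam_add, lam_neg, sub_eq_add_neg]

lemma mul_eq_add_lam (a b : A) : a * b = a + lam a b := by
  rw [lam, add_neg_cancel_left]

lemma lam_mul (a b c : A) : lam (a * b) c = lam a (lam b c) := by
  have h : lam a (lam b c) = -(a * b) + a * (b * c) := by
    rw [show lam b c = -b + b * c from rfl, lam_add, lam_neg]
    rw [show lam a b = -a + a * b from rfl, show lam a (b * c) = -a + a * (b * c) from rfl]
    rw [neg_add_rev, neg_neg, add_assoc, add_neg_cancel_left]
  rw [h, lam, mul_assoc]

lemma lam_one (b : A) : lam 1 b = b := by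
  rw [lam, one_mul, ← zero_eq_one', neg_zero, zero_add]

lemma lam_lam_inv (a b : A) : lam a (lam a⁻¹ b) = b := by
  rw [← lam_mul, mul_inv_cancel, lam_one]

lemma lam_inv_lam (a b : A) : lam a⁻¹ (lam a b) = b := by
  rw [← lam_mul, inv_mul_cancel, lam_one]

lemma star_eq (a b : A) : star a b = lam a b - b := rfl

lemma star_add_right (a b c : A) : star a (b + c) = star a b + (b + star a c + -b) := by
  simp only [star_eq, lam_add, sub_eq_add_neg, neg_add_rev, add_assoc,
    add_neg_cancel_left, neg_add_cancel_left]

lemma star_mul_left (a b c : A) : star (a * b) c = star a (star b c) + star b c + star a c := by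
  simp only [star_eq, lam_mul, sub_eq_add_neg, lam_add, lam_neg, neg_add_rev, neg_neg,
    add_assoc, add_neg_cancel_left, neg_add_cancel_left]

end Aux

section Aux2

variable {A : Type*} [SkewBrace A]

lemma Ideal.sub_mem (I : Ideal A) {a b : A} (ha : a ∈ I.carrier) (hb : b ∈ I.carrier) :
    a - b ∈ I.carrier := by
  rw [sub_eq_add_neg]; exact I.add_mem ha (I.neg_mem hb)

lemma Ideal.star_mem_right (I : Ideal A) (a : A) {b : A} (hb : b ∈ I.carrier) :
    star a b ∈ I.carrier := by
  rw [star_eq]; exact I.sub_mem (I.lam_mem a hb) hb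

lemma Ideal.star_mem_left (I : Ideal A) {a : A} (ha : a ∈ I.carrier) (b : A) :
    star a b ∈ I.carrier := by
  have h2 : b⁻¹ * a * b ∈ I.carrier := by
    have := I.mul_conj_mem b⁻¹ ha
    rwa [inv_inv] at this
  have hab : a * b = b + lam b (b⁻¹ * a * b) := by
    rw [← mul_eq_add_lam]
    group
  have key : star a b = -a + (b + lam b (b⁻¹ * a * b) + -b) := by
    rw [star, hab, sub_eq_add_neg, add_assoc, add_assoc]
  rw [key]
  exact I.add_mem (I.neg_mem ha) (I.add_conj_mem b (I.lam_mem b h2))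

lemma subset_genIdeal {S : Set A} : S ⊆ genIdeal S := fun _ hx I hI => hI hx

lemma genIdeal_subset {S : Set A} {I : Ideal A} (h : S ⊆ I.carrier) :
    genIdeal S ⊆ I.carrier := fun _ hx => hx I h

lemma genIdeal_mono {S T : Set A} (h : S ⊆ T) : genIdeal S ⊆ genIdeal T :=
  fun _ hx I hI => hx I (h.trans hI)

/-- The ideal generated by a set, as an `Ideal`. -/
def Ideal.ofGen (S : Set A) : Ideal A where
  carrier := genIdeal S
  zero_mem := fun I _ => I.zero_mem
  add_mem := fun _ _ ha hb I hI => I.add_mem (ha I hI) (hb I hI)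
  neg_mem := fun _ ha I hI => I.neg_mem (ha I hI)
  add_conj_mem := fun a _ hb I hI => I.add_conj_mem a (hb I hI)
  mul_conj_mem := fun a _ hb I hI => I.mul_conj_mem a (hb I hI)
  lam_mem := fun a _ hb I hI => I.lam_mem a (hb I hI)

@[simp] lemma Ideal.ofGen_carrier (S : Set A) : (Ideal.ofGen S).carrier = genIdeal S := rfl

/-- The zero ideal. -/
def Ideal.bot (A : Type*) [SkewBrace A] : Ideal A where
  carrier := {0}
  zero_mem := rfl
  add_mem := by rintro a b rfl rfl; simp
  neg_mem := by rintro a rfl; simp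
  add_conj_mem := by rintro a b rfl; simp
  mul_conj_mem := by
    rintro a b rfl
    show a * 0 * a⁻¹ ∈ ({(0 : A)} : Set A)
    rw [mul_zero', mul_inv_cancel, ← zero_eq_one']
    rfl
  lam_mem := by rintro a b rfl; simp [lam_zero]

/-- The full ideal. -/
def Ideal.top (A : Type*) [SkewBrace A] : Ideal A where
  carrier := Set.univ
  zero_mem := trivial
  add_mem := fun _ _ _ _ => trivial
  neg_mem := fun _ _ => trivial
  add_conj_mem := fun _ _ _ => trivial
  mul_conj_mem := fun _ _ _ => trivial
  lam_mem := fun _ _ _ => trivial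

/-- Intersection of two ideals. -/
def Ideal.inter (I J : Ideal A) : Ideal A where
  carrier := I.carrier ∩ J.carrier
  zero_mem := ⟨I.zero_mem, J.zero_mem⟩
  add_mem := fun _ _ ha hb => ⟨I.add_mem ha.1 hb.1, J.add_mem ha.2 hb.2⟩
  neg_mem := fun _ ha => ⟨I.neg_mem ha.1, J.neg_mem ha.2⟩
  add_conj_mem := fun a _ hb => ⟨I.add_conj_mem a hb.1, J.add_conj_mem a hb.2⟩
  mul_conj_mem := fun a _ hb => ⟨I.mul_conj_mem a hb.1, J.mul_conj_mem a hb.2⟩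
  lam_mem := fun a _ hb => ⟨I.lam_mem a hb.1, J.lam_mem a hb.2⟩

end Aux2

section Aux3

variable {A : Type*} [SkewBrace A]

/-- The sum of two ideals. -/
def Ideal.sum (C N : Ideal A) : Ideal A where
  carrier := {x | ∃ c ∈ C.carrier, ∃ n ∈ N.carrier, x = c + n}
  zero_mem := ⟨0, C.zero_mem, 0, N.zero_mem, (add_zero 0).symm⟩
  add_mem := by
    rintro _ _ ⟨c, hc, n, hn, rfl⟩ ⟨c', hc', n', hn', rfl⟩
    refine ⟨c + c', C.add_mem hc hc', -c' + n + c' + n',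
      N.add_mem (by simpa using N.add_conj_mem (-c') hn) hn', ?_⟩
    simp only [add_assoc, neg_add_cancel_left, add_neg_cancel_left]
  neg_mem := by
    rintro _ ⟨c, hc, n, hn, rfl⟩
    refine ⟨-c, C.neg_mem hc, c + -n + -c, by simpa using N.add_conj_mem c (N.neg_mem hn), ?_⟩
    simp only [neg_add_rev, add_assoc, neg_add_cancel_left]
  add_conj_mem := by
    rintro a _ ⟨c, hc, n, hn, rfl⟩
    refine ⟨a + c + -a, C.add_conj_mem a hc, a + n + -a, N.add_conj_mem a hn, ?_⟩
    simp only [add_assoc, neg_add_cancel_left]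
  mul_conj_mem := by
    rintro a _ ⟨c, hc, n, hn, rfl⟩
    have hy : c + n = c * lam c⁻¹ n := by rw [mul_eq_add_lam, lam_lam_inv]
    have h2 : a * (c + n) * a⁻¹ = (a * c * a⁻¹) * (a * lam c⁻¹ n * a⁻¹) := by
      rw [hy]; group
    refine ⟨a * c * a⁻¹, C.mul_conj_mem a hc,
      lam (a * c * a⁻¹) (a * lam c⁻¹ n * a⁻¹),
      N.lam_mem _ (N.mul_conj_mem a (N.lam_mem c⁻¹ hn)), ?_⟩
    rw [h2, mul_eq_add_lam]
  lam_mem := by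
    rintro a _ ⟨c, hc, n, hn, rfl⟩
    exact ⟨lam a c, C.lam_mem a hc, lam a n, N.lam_mem a hn, lam_add a c n⟩

/-- The union of a nonempty directed family of sets that are carriers of ideals is an ideal. -/
def Ideal.sUnionChain (c : Set (Set A)) (hne : c.Nonempty)
    (hdir : DirectedOn (· ⊆ ·) c) (hid : ∀ s ∈ c, ∃ K : Ideal A, K.carrier = s) : Ideal A where
  carrier := ⋃₀ c
  zero_mem := by
    obtain ⟨s, hs⟩ := hne
    obtain ⟨K, rfl⟩ := hid s hs
    exact ⟨K.carrier, hs, K.zero_mem⟩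
  add_mem := by
    rintro a b ⟨s, hs, has⟩ ⟨t, ht, hbt⟩
    obtain ⟨u, hu, hsu, htu⟩ := hdir s hs t ht
    obtain ⟨K, rfl⟩ := hid u hu
    exact ⟨K.carrier, hu, K.add_mem (hsu has) (htu hbt)⟩
  neg_mem := by
    rintro a ⟨s, hs, has⟩
    obtain ⟨K, rfl⟩ := hid s hs
    exact ⟨K.carrier, hs, K.neg_mem has⟩
  add_conj_mem := by
    rintro x a ⟨s, hs, has⟩
    obtain ⟨K, rfl⟩ := hid s hs
    exact ⟨K.carrier, hs, K.add_conj_mem x has⟩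
  mul_conj_mem := by
    rintro x a ⟨s, hs, has⟩
    obtain ⟨K, rfl⟩ := hid s hs
    exact ⟨K.carrier, hs, K.mul_conj_mem x has⟩
  lam_mem := by
    rintro x a ⟨s, hs, has⟩
    obtain ⟨K, rfl⟩ := hid s hs
    exact ⟨K.carrier, hs, K.lam_mem x has⟩

/-- In an Artinian brace, every nonempty family of ideals has a minimal member. -/
lemma exists_min (hA : IsArtinian A) (T : Set (Ideal A)) (h : T.Nonempty) :
    ∃ I ∈ T, ∀ J ∈ T, J.carrier ⊆ I.carrier → J.carrier = I.carrier := by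
  by_contra hc
  push_neg at hc
  obtain ⟨I₀, hI₀⟩ := h
  haveI : Nonempty (Ideal A) := ⟨Ideal.bot A⟩
  choose! g hg1 hg2 hg3 using hc
  set f : ℕ → Ideal A := fun n => g^[n] I₀ with hf
  have hmem : ∀ n, f n ∈ T := by
    intro n
    induction n with
    | zero => exact hI₀
    | succ n ih =>
      have : f (n + 1) = g (f n) := Function.iterate_succ_apply' g n I₀
      rw [this]
      exact hg1 _ ih
  have hdesc : ∀ n, (f (n + 1)).carrier ⊆ (f n).carrier := by
    intro n
    have : f (n + 1) = g (f n) := Function.iterate_succ_apply' g n I₀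
    rw [this]
    exact hg2 _ (hmem n)
  obtain ⟨N, hN⟩ := hA f hdesc
  have h1 : f (N + 1) = g (f N) := Function.iterate_succ_apply' g N I₀
  exact hg3 _ (hmem N) (h1 ▸ hN (N + 1) (Nat.le_succ N))

end Aux3

section Key

variable {A : Type*} [SkewBrace A]

/-- The key "chief factor" lemma: if `Q ⊆ N` are ideals with no ideal strictly between,
and `A` is generated as an ideal by `{a} ∪ N`, then (using perfectness) `A` is generated
by `{x} ∪ Q` for some `x`. -/
lemma key_lemma (hperf : sq A = Set.univ) (Q N : Ideal A) (hQN : Q.carrier ⊆ N.carrier)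
    (hadj : ∀ K : Ideal A, Q.carrier ⊆ K.carrier → K.carrier ⊆ N.carrier →
      K.carrier = Q.carrier ∨ K.carrier = N.carrier)
    (a : A) (ha : genIdeal ({a} ∪ N.carrier) = Set.univ) :
    ∃ x, genIdeal ({x} ∪ Q.carrier) = Set.univ := by
  by_cases hcase : ∃ n ∈ N.carrier, N.carrier ⊆ genIdeal ({a + n} ∪ Q.carrier)
  · obtain ⟨n, hn, hsub⟩ := hcase
    refine ⟨a + n, Set.eq_univ_of_univ_subset ?_⟩
    rw [← ha]
    refine genIdeal_subset (I := Ideal.ofGen ({a + n} ∪ Q.carrier)) ?_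
    rintro x (rfl | hx)
    · have h2 : x + n ∈ genIdeal ({x + n} ∪ Q.carrier) := subset_genIdeal (Or.inl rfl)
      have h3 := (Ideal.ofGen ({x + n} ∪ Q.carrier)).add_mem h2
        ((Ideal.ofGen ({x + n} ∪ Q.carrier)).neg_mem (hsub hn))
      rwa [add_neg_cancel_right] at h3
    · exact hsub hx
  · push_neg at hcase
    set C := Ideal.ofGen ({a} ∪ Q.carrier) with hC
    have haC : a ∈ C.carrier := subset_genIdeal (Or.inl rfl)
    have hQC : Q.carrier ⊆ C.carrier := fun q hq => subset_genIdeal (Or.inr hq)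
    have hDn : ∀ n ∈ N.carrier,
        (Ideal.ofGen ({a + n} ∪ Q.carrier)).carrier ∩ N.carrier = Q.carrier := by
      intro n hn
      set D := Ideal.ofGen ({a + n} ∪ Q.carrier) with hD
      have h1 : Q.carrier ⊆ (D.inter N).carrier :=
        fun q hq => ⟨subset_genIdeal (Or.inr hq), hQN hq⟩
      have h2 : (D.inter N).carrier ⊆ N.carrier := fun x hx => hx.2
      rcases hadj (D.inter N) h1 h2 with h | h
      · exact h
      · exfalso
        refine hcase n hn ?_
        intro x hx
        have hx' : x ∈ (D.inter N).carrier := h.symm ▸ hx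
        exact hx'.1
    have hCN : C.carrier ∩ N.carrier = Q.carrier := by
      have := hDn 0 N.zero_mem
      rwa [add_zero] at this
    have hCstarN : ∀ c ∈ C.carrier, ∀ m ∈ N.carrier, star c m ∈ Q.carrier := by
      intro c hc m hm
      rw [← hCN]
      exact ⟨C.star_mem_left hc m, N.star_mem_right c hm⟩
    have hNstarC : ∀ m ∈ N.carrier, ∀ c ∈ C.carrier, star m c ∈ Q.carrier := by
      intro m hm c hc
      rw [← hCN]
      exact ⟨C.star_mem_right m hc, N.star_mem_left hm c⟩
    have hNN : ∀ p ∈ N.carrier, ∀ m ∈ N.carrier, star p m ∈ Q.carrier := by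
      intro p hp m hm
      have hnN : lam a p ∈ N.carrier := N.lam_mem a hp
      set D := Ideal.ofGen ({a + lam a p} ∪ Q.carrier) with hD
      have hDQ : D.carrier ∩ N.carrier = Q.carrier := hDn _ hnN
      have hmul : a * p = a + lam a p := mul_eq_add_lam a p
      have h1 : star (a * p) m ∈ Q.carrier := by
        rw [hmul, ← hDQ]
        exact ⟨D.star_mem_left (subset_genIdeal (Or.inl rfl)) m, N.star_mem_right _ hm⟩
      have h2 : star a m ∈ Q.carrier := hCstarN a haC m hm
      have h3 : star a (star p m) ∈ Q.carrier := hCstarN a haC _ (N.star_mem_right p hm)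
      have hrw : star p m = -(star a (star p m)) + (star (a * p) m + -(star a m)) := by
        rw [star_mul_left, add_neg_cancel_right, neg_add_cancel_left]
      rw [hrw]
      exact Q.add_mem (Q.neg_mem h3) (Q.add_mem h1 (Q.neg_mem h2))
    have hsum : ∀ x : A, ∃ c ∈ C.carrier, ∃ n ∈ N.carrier, x = c + n := by
      have hs : Set.univ ⊆ (C.sum N).carrier := by
        rw [← ha]
        refine genIdeal_subset ?_
        rintro x (rfl | hx)
        · exact ⟨x, haC, 0, N.zero_mem, (add_zero x).symm⟩
        · exact ⟨0, C.zero_mem, x, hx, (zero_add x).symm⟩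
      exact fun x => hs (Set.mem_univ x)
    have hstar : ∀ x y : A, star x y ∈ C.carrier := by
      intro x y
      obtain ⟨c, hc, n, hn, rfl⟩ := hsum x
      obtain ⟨c', hc', n', hn', rfl⟩ := hsum y
      have hn₁ : lam c⁻¹ n ∈ N.carrier := N.lam_mem _ hn
      have hx : c + n = c * lam c⁻¹ n := by rw [mul_eq_add_lam, lam_lam_inv]
      rw [hx, star_mul_left]
      have e1 : star (lam c⁻¹ n) (c' + n') ∈ Q.carrier := by
        rw [star_add_right]
        exact Q.add_mem (hNstarC _ hn₁ c' hc') (Q.add_conj_mem c' (hNN _ hn₁ n' hn'))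
      have e2 : star c (c' + n') ∈ C.carrier := by
        rw [star_add_right]
        exact C.add_mem (C.star_mem_left hc c') (C.add_conj_mem c' (hQC (hCstarN c hc n' hn')))
      exact C.add_mem (C.add_mem (C.star_mem_left hc _) (hQC e1)) e2
    refine ⟨a, Set.eq_univ_of_univ_subset ?_⟩
    rw [← hperf]
    refine genIdeal_subset (I := C) ?_
    rintro x ⟨u, v, rfl⟩
    exact hstar u v

end Key
end SkewBrace

open SkewBrace in
/-- Wiegold analog: an Artinian perfect skew left brace of finite
weight has weight one. -/
theorem artinian_perfect_weight_one (A : Type*) [SkewBrace A] (hA : IsArtinian A)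
    (hperf : sq A = Set.univ) (hw : weight A ≠ ⊤) :
    weight A = 1 := by
  by_cases hs : Subsingleton A
  · simp [weight, hs]
  · have hnontriv : ∃ b : A, b ≠ 0 := by
      haveI := not_subsingleton_iff_nontrivial.mp hs
      exact exists_ne 0
    obtain ⟨b₀, hb₀⟩ := hnontriv
    -- a finite generating set exists
    have hF : ∃ F : Finset A, genIdeal (F : Set A) = Set.univ := by
      by_contra hno
      push_neg at hno
      refine hw ?_
      rw [weight, if_neg hs]
      exact eq_top_iff.mpr (le_iInf fun S => le_iInf fun h => absurd h (hno S))
    obtain ⟨F, hFgen⟩ := hF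
    -- the family of ideals I with ω(A/I) ≤ 1
    set T : Set (Ideal A) := {I | ∃ x : A, genIdeal ({x} ∪ I.carrier) = Set.univ} with hT
    have hTne : T.Nonempty := by
      refine ⟨Ideal.top A, 0, Set.eq_univ_of_univ_subset ?_⟩
      exact fun x _ => subset_genIdeal (Or.inr trivial)
    obtain ⟨I₀, hI₀T, hmin⟩ := exists_min hA T hTne
    obtain ⟨a, ha⟩ := hI₀T
    have hx1 : ∃ x : A, genIdeal {x} = Set.univ := by
      by_cases h0 : I₀.carrier ⊆ {0}
      · refine ⟨a, Set.eq_univ_of_univ_subset ?_⟩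
        rw [← ha]
        refine genIdeal_subset (I := Ideal.ofGen {a}) ?_
        rintro x (rfl | hx)
        · exact subset_genIdeal rfl
        · have hx0 : x = 0 := h0 hx
          rw [hx0]
          exact (Ideal.ofGen {a}).zero_mem
      · -- Zorn's lemma gives a maximal ideal properly below I₀
        obtain ⟨z, hz, hz0⟩ := Set.not_subset.mp h0
        set S : Set (Set A) :=
          {s | (∃ K : SkewBrace.Ideal A, K.carrier = s) ∧ s ⊆ I₀.carrier ∧ s ≠ I₀.carrier}
          with hS
        have hbot : ({0} : Set A) ∈ S := by
          refine ⟨⟨Ideal.bot A, rfl⟩, Set.singleton_subset_iff.mpr I₀.zero_mem, fun h => ?_⟩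
          rw [← h] at hz
          exact hz0 hz
        have hchain : ∀ c ⊆ S, IsChain (· ⊆ ·) c → c.Nonempty →
            ∃ ub ∈ S, ∀ s ∈ c, s ⊆ ub := by
          intro c hcS hch hcne
          refine ⟨⋃₀ c, ⟨⟨Ideal.sUnionChain c hcne hch.directedOn
            (fun s hs => (hcS hs).1), rfl⟩, Set.sUnion_subset (fun s hs => (hcS hs).2.1), ?_⟩,
            fun s hs => Set.subset_sUnion_of_mem hs⟩
          -- the union is not all of I₀
          intro heq
          have hdir : DirectedOn (fun i j : Set A =>
              genIdeal ({a} ∪ i) ⊆ genIdeal ({a} ∪ j)) c := by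
            intro s hs t ht
            rcases hch.total hs ht with h | h
            · exact ⟨t, ht, genIdeal_mono (Set.union_subset_union_right _ h), subset_rfl⟩
            · exact ⟨s, hs, subset_rfl, genIdeal_mono (Set.union_subset_union_right _ h)⟩
          have hV : (F : Set A) ⊆ ⋃ s ∈ c, genIdeal ({a} ∪ s) := by
            obtain ⟨hVideal, hVcar⟩ : ∃ V : SkewBrace.Ideal A,
                V.carrier = ⋃ s ∈ c, genIdeal ({a} ∪ s) :=
              ⟨Ideal.sUnionChain ((fun s => genIdeal ({a} ∪ s)) '' c)
                (hcne.image _)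
                (by
                  rintro _ ⟨s, hs, rfl⟩ _ ⟨t, ht, rfl⟩
                  obtain ⟨u, hu, h1, h2⟩ := hdir s hs t ht
                  exact ⟨genIdeal ({a} ∪ u), ⟨u, hu, rfl⟩, h1, h2⟩)
                (by rintro _ ⟨s, hs, rfl⟩; exact ⟨Ideal.ofGen _, rfl⟩),
               Set.sUnion_image _ _⟩
            have hsub : genIdeal ({a} ∪ I₀.carrier) ⊆ hVideal.carrier := by
              refine genIdeal_subset ?_
              rintro x (rfl | hx)
              · obtain ⟨s, hs⟩ := hcne
                rw [hVcar]
                exact Set.mem_biUnion hs (subset_genIdeal (Or.inl rfl))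
              · rw [← heq] at hx
                obtain ⟨s, hs, hxs⟩ := hx
                rw [hVcar]
                exact Set.mem_biUnion hs (subset_genIdeal (Or.inr hxs))
            rw [ha] at hsub
            rw [← hVcar]
            exact fun x _ => hsub trivial
          obtain ⟨s, hs, hFs⟩ :=
            DirectedOn.exists_mem_subset_of_finset_subset_biUnion hcne hdir hV
          obtain ⟨⟨K, hK⟩, hsub', hne'⟩ := hcS hs
          have hgen : genIdeal ({a} ∪ K.carrier) = Set.univ := by
            refine Set.eq_univ_of_univ_subset ?_
            rw [← hFgen, hK]
            exact genIdeal_subset (I := Ideal.ofGen ({a} ∪ s)) hFs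
          have := hmin K ⟨a, hgen⟩ (hK ▸ hsub')
          exact hne' (hK ▸ this)
        obtain ⟨m, -, hmmax⟩ := zorn_subset_nonempty S hchain {0} hbot
        obtain ⟨⟨Q, hQm⟩, hmsub, hmne⟩ := hmmax.prop
        have hadj : ∀ K : SkewBrace.Ideal A, Q.carrier ⊆ K.carrier →
            K.carrier ⊆ I₀.carrier → K.carrier = Q.carrier ∨ K.carrier = I₀.carrier := by
          intro K h1 h2
          by_cases hKe : K.carrier = I₀.carrier
          · exact Or.inr hKe
          · left
            have hKS : K.carrier ∈ S := ⟨⟨K, rfl⟩, h2, hKe⟩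
            have h3 : K.carrier ⊆ m := hmmax.le_of_ge hKS (hQm ▸ h1)
            rw [hQm]
            exact le_antisymm h3 (hQm ▸ h1)
        obtain ⟨x, hx⟩ := key_lemma hperf Q I₀ (hQm ▸ hmsub) hadj a ha
        have h4 := hmin Q ⟨x, hx⟩ (hQm ▸ hmsub)
        exact absurd (hQm.symm.trans h4) hmne
    obtain ⟨x, hgen⟩ := hx1
    have hwle : weight A ≤ 1 := by
      rw [weight, if_neg hs]
      refine iInf_le_of_le {x} (iInf_le_of_le ?_ ?_)
      · rw [Finset.coe_singleton]; exact hgen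
      · simp
    have hwge : 1 ≤ weight A := by
      rw [weight, if_neg hs]
      refine le_iInf fun S => le_iInf fun hSgen => ?_
      have hSne : S.Nonempty := by
        rcases S.eq_empty_or_nonempty with rfl | h
        · exfalso
          have hsub : genIdeal (∅ : Set A) ⊆ ({0} : Set A) :=
            genIdeal_subset (I := Ideal.bot A) (Set.empty_subset _)
          rw [Finset.coe_empty] at hSgen
          rw [hSgen] at hsub
          exact hb₀ (hsub (Set.mem_univ b₀))
        · exact h
      have h1 : 1 ≤ S.card := hSne.card_pos
      exact_mod_cast h1
    exact le_antisymm hwle hwge
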